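/- Let X have the bimodal Weibull density with α > 1. Then the moment generating function E[exp(tX)] is finite for every t ∈ ℝ and equals Σ_{n=0}^∞ (βt)^n/n! · [2Γ(1+n/α) + δ²β²Γ(1+(n+2)/α) - 2δβΓ(1+(n+1)/α)] / [2 + δ²β²Γ(1+2/α) - 2δβΓ(1+1/α)]. -/

import Mathlib

open Real MeasureTheory Set Filter

noncomputable def bwPdf (α β δ : ℝ) (x : ℝ) : ℝ :=
  (α / (β * (2 + δ^2*β^2*Real.Gamma (1+2/α) - 2*δ*β*Real.Gamma (1+1/α)))) *
    (1+(1-δ*x)^2) * (x/β)^(α-1) * Real.exp (-(x/β)^α)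

/-!
Expand `exp (t * x) = ∑ (t * x) ^ n / n !` and integrate termwise. This is legitimate because
the termwise absolute values sum to `exp |t * x| * |f x|`, which is integrable: for `α > 1` the
Weibull tail `exp (-(x / β) ^ α)` beats every exponential. Writing `1 + (1 - δ x) ^ 2` as
`2 - 2 δ x + δ ^ 2 x ^ 2`, the `n`-th moment of `f` is a combination of Weibull moments
`∫ x ^ s (x / β) ^ (α - 1) exp (-(x / β) ^ α) = β ^ (s + 1) Γ(1 + s / α) / α`, which is the Gamma
integral after the substitution `y = (x / β) ^ α`.
-/

open scoped Nat

theorem integral_exp_mul_mul_eq_tsum {μ : Measure ℝ} {g : ℝ → ℝ} {t : ℝ}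
    (hexp : Integrable (fun x => exp |t * x| * g x) μ)
    (hmom : ∀ n : ℕ, Integrable (fun x => x ^ n * g x) μ) :
    ∫ x, exp (t * x) * g x ∂μ = ∑' n : ℕ, t ^ n / n ! * ∫ x, x ^ n * g x ∂μ := by
  set F : ℕ → ℝ → ℝ := fun n x => t ^ n / n ! * (x ^ n * g x)
  have hF : ∀ n, Integrable (F n) μ := fun n => (hmom n).const_mul _
  have hnorm : ∀ n x, ‖F n x‖ = |t * x| ^ n / n ! * |g x| := by
    intro n x
    simp only [F, norm_mul, norm_div, norm_pow, Real.norm_eq_abs, Nat.abs_cast, abs_mul, mul_pow]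
    ring
  have hsum : Summable fun n => ∫ x, ‖F n x‖ ∂μ := by
    refine summable_of_sum_range_le (c := ∫ x, ‖exp |t * x| * g x‖ ∂μ)
      (fun n => integral_nonneg fun x => norm_nonneg _) fun N => ?_
    rw [← integral_finsetSum _ fun n _ => (hF n).norm]
    refine integral_mono (integrable_finsetSum _ fun n _ => (hF n).norm) hexp.norm fun x => ?_
    simp only [hnorm, ← Finset.sum_mul, norm_mul, Real.norm_eq_abs, abs_exp]
    exact mul_le_mul_of_nonneg_right (sum_le_exp_of_nonneg (abs_nonneg _) N) (abs_nonneg _)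
  have hseries : ∀ x, exp (t * x) * g x = ∑' n, F n x := by
    intro x
    rw [exp_eq_exp_ℝ, NormedSpace.exp_eq_tsum_div, ← tsum_mul_right]
    refine tsum_congr fun n => ?_
    simp only [F, mul_pow]
    ring
  simp only [hseries, ← integral_tsum_of_summable_integral_norm hF hsum, F, integral_const_mul]

theorem isLittleO_exp_mul_sub_mul_rpow {c b p : ℝ} (hb : 0 < b) (hp : 1 < p) :
    (fun x : ℝ => exp (c * x - b * x ^ p)) =o[atTop] fun x : ℝ => exp (-x) := by
  rw [isLittleO_exp_comp_exp_comp]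
  suffices Tendsto (fun x => x * (b * x ^ (p - 1) - (c + 1))) atTop atTop by
    refine this.congr' (eventuallyEq_of_mem (Ioi_mem_atTop 0) fun x (hx : 0 < x) => ?_)
    rw [rpow_sub_one hx.ne']
    field_simp
    ring
  refine tendsto_id.atTop_mul_atTop₀ (tendsto_atTop_add_const_right _ _ ?_)
  exact (tendsto_rpow_atTop (by linarith)).const_mul_atTop hb

theorem integrableOn_rpow_mul_exp_mul_sub_mul_rpow {c b q p : ℝ} (hb : 0 < b) (hq : -1 < q)
    (hp : 1 < p) : IntegrableOn (fun x : ℝ => x ^ q * exp (c * x - b * x ^ p)) (Ioi 0) := by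
  have hexp : Continuous fun x : ℝ => exp (c * x - b * x ^ p) := by
    have := continuous_rpow_const (q := p) (by linarith)
    fun_prop
  rw [← Ioc_union_Ioi_eq_Ioi zero_le_one, integrableOn_union]
  constructor
  · rw [← integrableOn_Icc_iff_integrableOn_Ioc]
    refine IntegrableOn.mul_continuousOn ?_ hexp.continuousOn isCompact_Icc
    exact (intervalIntegrable_iff_integrableOn_Icc_of_le zero_le_one).mp
      (intervalIntegral.intervalIntegrable_rpow' hq)
  · have hrpow : ContinuousOn (fun x : ℝ => x ^ q) (Ici 1) := fun x (hx : 1 ≤ x) =>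
      continuousWithinAt_id.rpow_const (Or.inl (by positivity))
    refine integrable_of_isBigO_exp_neg one_half_pos (hrpow.mul hexp.continuousOn) ?_
    refine (((Asymptotics.isBigO_refl _ atTop).mul_isLittleO
      (isLittleO_exp_mul_sub_mul_rpow (c := c) hb hp)).trans ?_).isBigO
    simpa only [mul_comm] using Gamma_integrand_isLittleO q

noncomputable def weibullKernel (α β x : ℝ) : ℝ := (x / β) ^ (α - 1) * exp (-(x / β) ^ α)

theorem exp_mul_mul_rpow_mul_weibullKernel {α β x : ℝ} (hβ : 0 < β) (hx : 0 < x) (c s : ℝ) :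
    exp (c * x) * x ^ s * weibullKernel α β x
      = β ^ (1 - α) * (x ^ (s + α - 1) * exp (c * x - β ^ (-α) * x ^ α)) := by
  rw [weibullKernel, div_rpow hx.le hβ.le, div_rpow hx.le hβ.le, add_sub_assoc, rpow_add hx,
    show 1 - α = -(α - 1) by ring, rpow_neg hβ.le, rpow_neg hβ.le, sub_eq_add_neg (c * x),
    exp_add]
  ring_nf

theorem integrableOn_exp_mul_rpow_mul_weibullKernel {α β s : ℝ} (hα : 1 < α) (hβ : 0 < β)
    (hs : -α < s) (c : ℝ) :
    IntegrableOn (fun x => exp (c * x) * x ^ s * weibullKernel α β x) (Ioi 0) := by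
  refine IntegrableOn.congr_fun ((integrableOn_rpow_mul_exp_mul_sub_mul_rpow (c := c)
    (rpow_pos_of_pos hβ (-α)) (by linarith : -1 < s + α - 1) hα).const_mul (β ^ (1 - α)))
    (fun x hx => (exp_mul_mul_rpow_mul_weibullKernel hβ hx c s).symm) measurableSet_Ioi

theorem integral_rpow_mul_weibullKernel {α β s : ℝ} (hα : 0 < α) (hβ : 0 < β) (hs : -α < s) :
    ∫ x in Ioi (0 : ℝ), x ^ s * weibullKernel α β x = β ^ (s + 1) / α * Gamma (1 + s / α) := by
  calc ∫ x in Ioi (0 : ℝ), x ^ s * weibullKernel α β x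
      = ∫ x in Ioi (0 : ℝ), β ^ (1 - α) * (x ^ (s + α - 1) * exp (-β ^ (-α) * x ^ α)) := by
        refine setIntegral_congr_fun measurableSet_Ioi fun x hx => ?_
        simpa using exp_mul_mul_rpow_mul_weibullKernel hβ hx 0 s
    _ = β ^ (s + 1) / α * Gamma (1 + s / α) := by
        rw [integral_const_mul, integral_rpow_mul_exp_neg_mul_rpow hα (by linarith)
          (rpow_pos_of_pos hβ _), ← rpow_mul hβ.le, sub_add_cancel, ← mul_assoc, ← mul_assoc,
          ← rpow_add hβ, show 1 - α + -α * (-(s + α) / α) = s + 1 by field_simp; ring,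
          show (s + α) / α = 1 + s / α by field_simp; ring]
        ring

theorem integrableOn_exp_mul_pow_mul_weibullKernel {α β : ℝ} (hα : 1 < α) (hβ : 0 < β)
    (c : ℝ) (n : ℕ) :
    IntegrableOn (fun x => exp (c * x) * x ^ n * weibullKernel α β x) (Ioi 0) := by
  have hn : -α < n := by linarith [n.cast_nonneg (α := ℝ)]
  simpa only [rpow_natCast] using integrableOn_exp_mul_rpow_mul_weibullKernel hα hβ hn c

noncomputable def bwNormalizer (α β δ : ℝ) : ℝ :=
  2 + δ ^ 2 * β ^ 2 * Gamma (1 + 2 / α) - 2 * δ * β * Gamma (1 + 1 / α)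

theorem pow_mul_bwPdf (α β δ x : ℝ) (n : ℕ) :
    x ^ n * bwPdf α β δ x = α / (β * bwNormalizer α β δ) *
      (2 * (x ^ n * weibullKernel α β x) - 2 * δ * (x ^ (n + 1) * weibullKernel α β x)
        + δ ^ 2 * (x ^ (n + 2) * weibullKernel α β x)) := by
  simp only [bwPdf, bwNormalizer, weibullKernel]
  ring

theorem integrableOn_exp_mul_pow_mul_bwPdf {α β : ℝ} (hα : 1 < α) (hβ : 0 < β) (δ c : ℝ)
    (n : ℕ) : IntegrableOn (fun x => exp (c * x) * (x ^ n * bwPdf α β δ x)) (Ioi 0) := by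
  have hW := integrableOn_exp_mul_pow_mul_weibullKernel hα hβ c
  have hsum := ((((hW n).const_mul 2).sub ((hW (n + 1)).const_mul (2 * δ))).add
    ((hW (n + 2)).const_mul (δ ^ 2))).const_mul (α / (β * bwNormalizer α β δ))
  refine IntegrableOn.congr_fun hsum (fun x _ => ?_) measurableSet_Ioi
  simp only [pow_mul_bwPdf, Pi.add_apply, Pi.sub_apply]
  ring

theorem integral_pow_mul_bwPdf {α β : ℝ} (hα : 1 < α) (hβ : 0 < β) (δ : ℝ) (n : ℕ) :
    ∫ x in Ioi (0 : ℝ), x ^ n * bwPdf α β δ x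
      = β ^ n * (2 * Gamma (1 + n / α) + δ ^ 2 * β ^ 2 * Gamma (1 + (n + 2) / α)
          - 2 * δ * β * Gamma (1 + (n + 1) / α)) / bwNormalizer α β δ := by
  have hW : ∀ k : ℕ, IntegrableOn (fun x => x ^ k * weibullKernel α β x) (Ioi 0) := fun k => by
    simpa using integrableOn_exp_mul_pow_mul_weibullKernel hα hβ 0 k
  have hmoment : ∀ k : ℕ, ∫ x in Ioi (0 : ℝ), x ^ k * weibullKernel α β x
      = β ^ (k + 1) / α * Gamma (1 + k / α) := fun k => by
    have hk : -α < k := by linarith [k.cast_nonneg (α := ℝ)]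
    simpa only [rpow_natCast, ← Nat.cast_succ]
      using integral_rpow_mul_weibullKernel (by linarith) hβ hk
  simp_rw [pow_mul_bwPdf]
  have hsub : IntegrableOn (fun x => 2 * (x ^ n * weibullKernel α β x)
      - 2 * δ * (x ^ (n + 1) * weibullKernel α β x)) (Ioi 0) :=
    ((hW n).const_mul _).sub ((hW _).const_mul _)
  rw [integral_const_mul, integral_add hsub ((hW _).const_mul _),
    integral_sub ((hW n).const_mul _) ((hW _).const_mul _),
    integral_const_mul, integral_const_mul, integral_const_mul, hmoment, hmoment, hmoment]
  have : α ≠ 0 := by positivity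
  field_simp
  push_cast
  ring

theorem stmt_11 (α β δ : ℝ) (hα : 1 < α) (hβ : 0 < β) (t : ℝ) :
    MeasureTheory.IntegrableOn (fun x => Real.exp (t*x) * bwPdf α β δ x) (Set.Ioi 0) ∧
    (∫ x in Set.Ioi (0:ℝ), Real.exp (t*x) * bwPdf α β δ x)
      = ∑' n : ℕ, (β*t)^n / (n.factorial : ℝ) *
          (2*Real.Gamma (1+(n:ℝ)/α) + δ^2*β^2*Real.Gamma (1+((n:ℝ)+2)/α)
            - 2*δ*β*Real.Gamma (1+((n:ℝ)+1)/α))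
          / (2 + δ^2*β^2*Real.Gamma (1+2/α) - 2*δ*β*Real.Gamma (1+1/α)) := by
  have hint := integrableOn_exp_mul_pow_mul_bwPdf hα hβ δ
  have habs : IntegrableOn (fun x => exp (|t| * x) * bwPdf α β δ x) (Ioi 0) := by
    simpa using hint |t| 0
  have hmom (n : ℕ) : IntegrableOn (fun x => x ^ n * bwPdf α β δ x) (Ioi 0) := by
    simpa using hint 0 n
  refine ⟨by simpa using hint t 0, ?_⟩
  rw [integral_exp_mul_mul_eq_tsum (habs.congr_fun (fun x (hx : x ∈ Ioi 0) => by
    simp only [abs_mul, abs_of_pos (show 0 < x from hx)]) measurableSet_Ioi) hmom]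
  refine tsum_congr fun n => ?_
  rw [integral_pow_mul_bwPdf hα hβ, bwNormalizer]
  ring
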